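/- arXiv:2602.07913 — 2 statements merged into one kernel-verified Lean document; each statement's English description precedes it below -/
import Mathlib

section
/- If λ > Σ_{k=1}^n u_k (with u_i ≥ 0 and c_{ij} nonnegative integers), then every maximizer x* of the MaRP objective f(x) = Σ_i u_i x_i − λ Σ_{i<j} c_{ij} x_i x_j over {0,1}^n satisfies c_{ij} x*_i x*_j = 0 for all i < j; i.e., no two selected indices have positive overlap. -/
/-- If `λ > Σ u_k`, every binary maximizer of the MaRP objective selects
pairwise non-overlapping routes: `c i j * x*_i * x*_j = 0` for all `i < j`. -/
theorem stmt_2 (n : ℕ) (u : Fin n → ℝ) (c : Fin n → Fin n → ℕ) (lam : ℝ)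
    (hu : ∀ i, 0 ≤ u i) (hsymm : ∀ i j, c i j = c j i)
    (hlam : lam > ∑ k, u k)
    (f : (Fin n → ℝ) → ℝ)
    (hf : ∀ x, f x = (∑ k, u k * x k) -
      lam * ∑ k, ∑ l, if k < l then (c k l : ℝ) * x k * x l else 0)
    (xstar : Fin n → ℝ) (hbin : ∀ k, xstar k = 0 ∨ xstar k = 1)
    (hopt : ∀ y : Fin n → ℝ, (∀ k, y k = 0 ∨ y k = 1) → f y ≤ f xstar) :
    ∀ i j : Fin n, i < j → (c i j : ℝ) * xstar i * xstar j = 0 := by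
  intro i j hij
  by_contra h
  have hterm : ∀ k l : Fin n,
      (0:ℝ) ≤ if k < l then (c k l : ℝ) * xstar k * xstar l else 0 := by
    intro k l
    split
    · rcases hbin k with h1 | h1 <;> rcases hbin l with h2 | h2 <;>
        simp [h1, h2] <;> positivity
    · exact le_refl 0
  have hone : (1:ℝ) ≤ (c i j : ℝ) * xstar i * xstar j := by
    rcases hbin i with h1 | h1 <;> rcases hbin j with h2 | h2 <;>
      simp [h1, h2] at h ⊢
    exact_mod_cast Nat.one_le_iff_ne_zero.mpr (by exact_mod_cast h)
  have hP : (1:ℝ) ≤ ∑ k, ∑ l, if k < l then (c k l : ℝ) * xstar k * xstar l else 0 := by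
    have h1 : (1:ℝ) ≤ ∑ l, if i < l then (c i l : ℝ) * xstar i * xstar l else 0 := by
      calc (1:ℝ) ≤ if i < j then (c i j : ℝ) * xstar i * xstar j else 0 := by
            simpa [hij] using hone
        _ ≤ _ := Finset.single_le_sum (fun l _ => hterm i l) (Finset.mem_univ j)
    calc (1:ℝ) ≤ _ := h1
      _ ≤ _ := Finset.single_le_sum
          (fun k _ => Finset.sum_nonneg fun l _ => hterm k l) (Finset.mem_univ i)
  have hsum : ∑ k, u k * xstar k ≤ ∑ k, u k := by
    apply Finset.sum_le_sum
    intro k _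
    rcases hbin k with h1 | h1 <;> simp [h1, hu k]
  have hlam0 : 0 ≤ lam :=
    le_of_lt (lt_of_le_of_lt (Finset.sum_nonneg fun k _ => hu k) hlam)
  have hzero : f (fun _ => 0) = 0 := by simp [hf]
  have hle := hopt (fun _ => 0) (fun k => Or.inl rfl)
  rw [hzero, hf] at hle
  have : lam * 1 ≤ lam * ∑ k, ∑ l, if k < l then (c k l : ℝ) * xstar k * xstar l else 0 :=
    mul_le_mul_of_nonneg_left hP hlam0
  linarith
end

section
/- With λ := 1 + Σ_k w_k, u_i := w_i ≥ 0 and c_{ij} := |S_i ∩ S_j|, any optimal solution x* of the MaRP instance selects a pairwise disjoint family: for all i ≠ j with x*_i = x*_j = 1, S_i ∩ S_j = ∅. -/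
/-- In the WSP-to-MaRP reduction with `λ = 1 + Σ w`, any optimal binary
solution selects a pairwise disjoint family of sets. -/
theorem stmt_4 {U : Type*} [DecidableEq U] (n : ℕ)
    (S : Fin n → Finset U) (w : Fin n → ℝ) (hw : ∀ i, 0 ≤ w i)
    (lam : ℝ) (hlam : lam = 1 + ∑ k, w k)
    (f : (Fin n → ℝ) → ℝ)
    (hf : ∀ x, f x = (∑ i, w i * x i) -
      lam * ∑ i, ∑ j, if i < j then ((S i ∩ S j).card : ℝ) * x i * x j else 0)
    (xstar : Fin n → ℝ) (hbin : ∀ k, xstar k = 0 ∨ xstar k = 1)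
    (hopt : ∀ y : Fin n → ℝ, (∀ k, y k = 0 ∨ y k = 1) → f y ≤ f xstar) :
    ∀ i j : Fin n, i ≠ j → xstar i = 1 → xstar j = 1 → S i ∩ S j = ∅ := by
  have key : ∀ i j : Fin n, i < j → xstar i = 1 → xstar j = 1 → S i ∩ S j = ∅ := by
    intro i j hij hxi hxj
    by_contra hne
    have hc1 : (1:ℝ) ≤ ((S i ∩ S j).card : ℝ) := by
      have : 0 < (S i ∩ S j).card :=
        Finset.card_pos.mpr (Finset.nonempty_iff_ne_empty.mpr hne)
      exact_mod_cast this
    set y : Fin n → ℝ := Function.update xstar i 0 with hy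
    have hybin : ∀ k, y k = 0 ∨ y k = 1 := by
      intro k
      by_cases hk : k = i
      · subst hk; simp [hy]
      · simpa [hy, Function.update_of_ne hk] using hbin k
    have hle := hopt y hybin
    have hnn : ∀ a, 0 ≤ xstar a := by
      intro a; rcases hbin a with h | h <;> simp [h]
    have hynn : ∀ a, 0 ≤ y a := by
      intro a; rcases hybin a with h | h <;> simp [h]
    -- linear part difference
    have hlin : (∑ k, w k * xstar k) - (∑ k, w k * y k) = w i := by
      rw [← Finset.sum_sub_distrib, Finset.sum_eq_single i]
      · simp [hy, hxi]
      · intro b _ hb; simp [hy, Function.update_of_ne hb]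
      · simp
    -- quadratic part difference, termwise nonneg
    set D : Fin n → Fin n → ℝ := fun a b =>
      (if a < b then ((S a ∩ S b).card : ℝ) * xstar a * xstar b else 0)
        - (if a < b then ((S a ∩ S b).card : ℝ) * y a * y b else 0) with hD
    have hDnn : ∀ a b : Fin n, 0 ≤ D a b := by
      intro a b
      simp only [hD]
      by_cases hab : a < b
      · simp only [hab, if_true]
        by_cases ha : a = i
        · subst ha
          have : y a = 0 := by simp [hy]
          rw [this]
          have := hnn a; have := hnn b
          have hcard : (0:ℝ) ≤ ((S a ∩ S b).card : ℝ) := by positivity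
          nlinarith [mul_nonneg (mul_nonneg hcard (hnn a)) (hnn b)]
        · by_cases hb : b = i
          · subst hb
            have : y b = 0 := by simp [hy]
            rw [this]
            have := hnn a; have := hnn b
            have hcard : (0:ℝ) ≤ ((S a ∩ S b).card : ℝ) := by positivity
            nlinarith [mul_nonneg (mul_nonneg hcard (hnn a)) (hnn b)]
          · simp [hy, Function.update_of_ne ha, Function.update_of_ne hb]
      · simp [hab]
    have hDij : D i j = ((S i ∩ S j).card : ℝ) := by
      have hyi : y i = 0 := by simp [hy]
      have hyj : y j = xstar j := by
        simp [hy, Function.update_of_ne (ne_of_gt hij)]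
      simp [hD, hij, hxi, hxj, hyi]
    have hquad :
        ((S i ∩ S j).card : ℝ) ≤
          (∑ a, ∑ b, if a < b then ((S a ∩ S b).card : ℝ) * xstar a * xstar b else 0)
          - (∑ a, ∑ b, if a < b then ((S a ∩ S b).card : ℝ) * y a * y b else 0) := by
      have heq :
          (∑ a, ∑ b, if a < b then ((S a ∩ S b).card : ℝ) * xstar a * xstar b else 0)
          - (∑ a, ∑ b, if a < b then ((S a ∩ S b).card : ℝ) * y a * y b else 0)
          = ∑ a, ∑ b, D a b := by
        rw [← Finset.sum_sub_distrib]
        congr 1; ext a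
        rw [← Finset.sum_sub_distrib]
      rw [heq, ← hDij]
      calc D i j ≤ ∑ b, D i b :=
            Finset.single_le_sum (fun b _ => hDnn i b) (Finset.mem_univ j)
        _ ≤ ∑ a, ∑ b, D a b :=
            Finset.single_le_sum
              (fun a _ => Finset.sum_nonneg (fun b _ => hDnn a b))
              (Finset.mem_univ i)
    have hwi : w i ≤ ∑ k, w k :=
      Finset.single_le_sum (fun k _ => hw k) (Finset.mem_univ i)
    have hlam1 : 1 + w i ≤ lam := by rw [hlam]; linarith
    rw [hf y, hf xstar] at hle
    nlinarith [hquad, hc1, hlam1, hw i]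
  intro i j hij hxi hxj
  rcases lt_or_gt_of_ne hij with h | h
  · exact key i j h hxi hxj
  · rw [Finset.inter_comm]; exact key j i h hxj hxi
end
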